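/- arXiv:1811.00076 — 2 statements merged into one kernel-verified Lean document; each statement's English description precedes it below -/
import Mathlib

section
/- Let H : [0,1] → ℝ be bounded, decreasing, and c, σ > 0. Define V_∞(c) = −2cσ² ln(∫₀^1 exp(−H(z)/(2cσ²)) dz). Then lim_{c→0⁺} V_∞(c) = H(1⁻), the left limit of H at 1. -/
open MeasureTheory Filter

/-! A Laplace-type principle: as `t → 0⁺` the integral `∫ₐᵇ exp (-H / t)` is dominated by
the values of `H` near its infimum, which for antitone `H` is the left limit `L = H(b⁻)`.
The bound `H ≥ L` on `[a, b)` gives `∫ₐᵇ exp (-H / t) ≤ (b - a) exp (-L / t)`, and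
monotonicity of `exp (-H / t)` gives `∫ₐᵇ exp (-H / t) ≥ (b - c) exp (-H c / t)` for `c < b`
with `H c` as close to `L` as we like. After taking `-t log`, both bounds are of the form
`K - t log d → K`. -/

open Real Set Topology

section Laplace

variable {H : ℝ → ℝ} {a b L t : ℝ}

lemma AntitoneOn.le_of_tendsto_nhdsLT (hanti : AntitoneOn H (Icc a b))
    (hL : Tendsto H (𝓝[<] b) (𝓝 L)) {z : ℝ} (hz : z ∈ Ico a b) : L ≤ H z :=
  le_of_tendsto hL <| by
    filter_upwards [Ioo_mem_nhdsLT hz.2] with w hw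
    exact hanti ⟨hz.1, hz.2.le⟩ ⟨hz.1.trans hw.1.le, hw.2.le⟩ hw.1.le

lemma AntitoneOn.monotoneOn_exp_neg_div (hanti : AntitoneOn H (Icc a b)) (ht : 0 < t) :
    MonotoneOn (fun z => exp (-H z / t)) (Icc a b) :=
  fun _ hx _ hy hxy =>
    exp_le_exp.2 <| div_le_div_of_nonneg_right (neg_le_neg (hanti hx hy hxy)) ht.le

lemma AntitoneOn.intervalIntegrable_exp_neg_div (hab : a ≤ b) (hanti : AntitoneOn H (Icc a b))
    (ht : 0 < t) : IntervalIntegrable (fun z => exp (-H z / t)) volume a b :=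
  MonotoneOn.intervalIntegrable <| by
    rw [uIcc_of_le hab]
    exact hanti.monotoneOn_exp_neg_div ht

lemma integral_exp_neg_div_le (hab : a ≤ b) (hanti : AntitoneOn H (Icc a b))
    (hL : Tendsto H (𝓝[<] b) (𝓝 L)) (ht : 0 < t) :
    ∫ z in a..b, exp (-H z / t) ≤ (b - a) * exp (-L / t) := by
  have hle := intervalIntegral.integral_mono_on_of_le_Ioo hab
    (hanti.intervalIntegrable_exp_neg_div hab ht) intervalIntegrable_const fun z hz =>
      exp_le_exp.2 <| div_le_div_of_nonneg_right
        (neg_le_neg (hanti.le_of_tendsto_nhdsLT hL ⟨hz.1.le, hz.2⟩)) ht.le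
  simpa using hle

lemma mul_exp_neg_div_le_integral (hanti : AntitoneOn H (Icc a b)) (ht : 0 < t) {c : ℝ}
    (hc : c ∈ Icc a b) : (b - c) * exp (-H c / t) ≤ ∫ z in a..b, exp (-H z / t) := by
  have hmono := hanti.monotoneOn_exp_neg_div ht
  calc (b - c) * exp (-H c / t) = ∫ _ in c..b, exp (-H c / t) := by simp
    _ ≤ ∫ z in c..b, exp (-H z / t) :=
      intervalIntegral.integral_mono_on hc.2 intervalIntegrable_const
        ((hanti.mono (Icc_subset_Icc_left hc.1)).intervalIntegrable_exp_neg_div hc.2 ht)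
        fun z hz => hmono hc ⟨hc.1.trans hz.1, hz.2⟩ hz.1
    _ ≤ ∫ z in a..b, exp (-H z / t) :=
      intervalIntegral.integral_mono_interval hc.1 hc.2 le_rfl
        (Eventually.of_forall fun _ => (exp_pos _).le)
        (hanti.intervalIntegrable_exp_neg_div (hc.1.trans hc.2) ht)

lemma tendsto_neg_mul_log_mul_exp_neg_div {d : ℝ} (hd : 0 < d) (K : ℝ) :
    Tendsto (fun t => -t * log (d * exp (-K / t))) (𝓝[>] 0) (𝓝 K) := by
  have hlim : Tendsto (fun t : ℝ => K - t * log d) (𝓝[>] 0) (𝓝 K) :=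
    ((continuous_const.sub (continuous_id.mul continuous_const)).tendsto' 0 K
      (by simp)).mono_left nhdsWithin_le_nhds
  refine hlim.congr' ?_
  filter_upwards [self_mem_nhdsWithin] with t (ht : 0 < t)
  rw [log_mul hd.ne' (exp_ne_zero _), log_exp]
  field_simp
  ring

lemma neg_mul_log_le_neg_mul_log (ht : 0 < t) {x y : ℝ} (hx : 0 < x) (hxy : x ≤ y) :
    -t * log y ≤ -t * log x :=
  mul_le_mul_of_nonpos_left (log_le_log hx hxy) (neg_nonpos.2 ht.le)

theorem tendsto_neg_mul_log_integral_exp_neg_div (hab : a < b) (hanti : AntitoneOn H (Icc a b))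
    (hL : Tendsto H (𝓝[<] b) (𝓝 L)) :
    Tendsto (fun t => -t * log (∫ z in a..b, exp (-H z / t))) (𝓝[>] 0) (𝓝 L) := by
  have hpos : ∀ t > 0, 0 < ∫ z in a..b, exp (-H z / t) := fun t ht =>
    (mul_pos (sub_pos.2 hab) (exp_pos _)).trans_le
      (mul_exp_neg_div_le_integral hanti ht (left_mem_Icc.2 hab.le))
  refine tendsto_order.2 ⟨fun L' hL' => ?_, fun L' hL' => ?_⟩
  · filter_upwards [(tendsto_neg_mul_log_mul_exp_neg_div (sub_pos.2 hab) L).eventually_const_lt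
      hL', self_mem_nhdsWithin] with t hlt ht
    exact hlt.trans_le <|
      neg_mul_log_le_neg_mul_log ht (hpos t ht) (integral_exp_neg_div_le hab.le hanti hL ht)
  · obtain ⟨c, hc, hHc⟩ : ∃ c ∈ Ico a b, H c < L' :=
      ((hL.eventually (gt_mem_nhds hL')).and (Ico_mem_nhdsLT hab)).exists.imp
        fun _ h => ⟨h.2, h.1⟩
    filter_upwards [(tendsto_neg_mul_log_mul_exp_neg_div (sub_pos.2 hc.2) (H c)).eventually_lt_const
      hHc, self_mem_nhdsWithin] with t hlt ht
    exact (neg_mul_log_le_neg_mul_log ht (mul_pos (sub_pos.2 hc.2) (exp_pos _))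
      (mul_exp_neg_div_le_integral hanti ht (Ico_subset_Icc_self hc))).trans_lt hlt

end Laplace

theorem stmt8_general (σ : ℝ) (hσ : 0 < σ) (H : ℝ → ℝ) (L : ℝ)
    (hanti : AntitoneOn H (Set.Icc 0 1))
    (hL : Tendsto H (nhdsWithin 1 (Set.Iio 1)) (nhds L)) :
    Tendsto (fun c : ℝ =>
        -2 * c * σ ^ 2 * Real.log (∫ z in (0:ℝ)..1, Real.exp (-H z / (2 * c * σ ^ 2))))
      (nhdsWithin 0 (Set.Ioi 0)) (nhds L) := by
  have hscale : Tendsto (fun c : ℝ => 2 * c * σ ^ 2) (𝓝[>] 0) (𝓝[>] 0) := by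
    refine tendsto_nhdsWithin_of_tendsto_nhds_of_eventually_within _ ?_ ?_
    · exact ((continuous_const.mul continuous_id).mul continuous_const).tendsto' 0 0
        (by simp) |>.mono_left nhdsWithin_le_nhds
    · filter_upwards [self_mem_nhdsWithin] with c (hc : 0 < c)
      exact mul_pos (mul_pos two_pos hc) (pow_pos hσ 2)
  refine ((tendsto_neg_mul_log_integral_exp_neg_div zero_lt_one hanti hL).comp hscale).congr
    fun c => ?_
  simp only [Function.comp_apply]
  ring

/-- Let H : [0,1] → ℝ be bounded and decreasing, σ > 0, and let L = H(1⁻) be the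
left limit of H at 1. With V_∞(c) = −2cσ² ln(∫₀¹ exp(−H(z)/(2cσ²)) dz), we have
V_∞(c) → H(1⁻) as c → 0⁺. -/
theorem stmt8 (σ : ℝ) (hσ : 0 < σ) (H : ℝ → ℝ) (L : ℝ)
    (hanti : AntitoneOn H (Set.Icc 0 1))
    (hbd : ∃ M, ∀ z ∈ Set.Icc (0:ℝ) 1, |H z| ≤ M)
    (hL : Tendsto H (nhdsWithin 1 (Set.Iio 1)) (nhds L)) :
    Tendsto (fun c : ℝ =>
        -2 * c * σ ^ 2 * Real.log (∫ z in (0:ℝ)..1, Real.exp (-H z / (2 * c * σ ^ 2))))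
      (nhdsWithin 0 (Set.Ioi 0)) (nhds L) :=
  stmt8_general σ hσ H L hanti hL
end

section
/- Let R : ℝ₊ × [0,1] → ℝ be such that the divided difference h(t,x,y) = (R(t,x) − R(t,y))/(x − y) (extended by ∂_x R(t,x) on the diagonal) is well-defined, non-positive, and increasing in each of t, x, y on [t₀,T] × [0,1]². Let μ, μ′ be probability measures whose c.d.f.s F_μ, F_{μ′} are absolutely continuous on [t₀,T] with F_μ(t₀) = F_{μ′}(t₀), and suppose t ↦ R(t,F_μ(t)) and t ↦ h(t, F_μ(t), F_{μ′}(t)) are absolutely continuous on [t₀,T]. Then ∫_{t₀}^T (R(t,F_μ(t)) − R(t,F_{μ′}(t))) d(μ − μ′)(t) ≤ 0. -/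
open MeasureTheory Set Filter Topology
open scoped Interval

/-! Write `G = Fμ - Fμ'` and `H t = h t (Fμ t) (Fμ' t)`. Since `h` is the divided difference of
`R t`, the integrand is `D = G * H`, and `D t₀ = 0`. Off the countably many atoms,
`ν [s, T] = Fν T - Fν s`, so Fubini turns `∫ D d(μ - μ')` into `∫ D' (G T - G)`, which an
integration by parts turns into `∫ D G' = ∫ G G' H`. A second integration by parts gives
`H T * G(T)² / 2 - ∫ H' G² / 2`: both terms are `≤ 0` because `H ≤ 0`, and `H` is increasing
(as `h` is increasing in each variable and the c.d.f.s are increasing). -/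

theorem ae_measure_singleton_eq_zero {α : Type*} [MeasurableSpace α] [MeasurableSingletonClass α]
    (ν μ : Measure α) [SFinite ν] [NullSingletonClass μ] : ∀ᵐ x ∂μ, ν {x} = 0 := by
  have hatoms : {x : α | 0 < ν {x}}.Countable :=
    Measure.countable_meas_pos_of_disjoint_iUnion (fun _ => measurableSet_singleton _)
      fun _ _ hxy => disjoint_singleton.2 hxy
  simpa [ae_iff, pos_iff_ne_zero] using hatoms.measure_zero μ

theorem measureReal_Icc_eq_sub {ν : Measure ℝ} [IsFiniteMeasure ν] {s b : ℝ} (hs : ν {s} = 0)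
    (hsb : s ≤ b) : ν.real (Icc s b) = ν.real (Iic b) - ν.real (Iic s) := by
  rw [← Ioc_insert_left hsb, insert_eq, measureReal_union (by simp) measurableSet_Ioc,
    (measureReal_eq_zero_iff).2 hs, zero_add, ← Iic_sdiff_Iic,
    measureReal_sdiff (Iic_subset_Iic.2 hsb) measurableSet_Iic]

theorem monotone_measureReal_Iic (ν : Measure ℝ) [IsFiniteMeasure ν] :
    Monotone fun t => ν.real (Iic t) := fun _ _ hst => measureReal_mono (Iic_subset_Iic.2 hst)

theorem IntervalIntegrable.mul_measureReal_Icc {ν : Measure ℝ} [IsFiniteMeasure ν] {φ : ℝ → ℝ}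
    {a b c : ℝ} (hφ : IntervalIntegrable φ volume a b) :
    IntervalIntegrable (fun s => φ s * ν.real (Icc s c)) volume a b := by
  have hanti : Antitone fun s => ν.real (Icc s c) := fun _ _ hst =>
    measureReal_mono (Icc_subset_Icc_left hst)
  rw [intervalIntegrable_iff] at hφ ⊢
  refine hφ.mul_bdd hanti.measurable.aestronglyMeasurable (c := ν.real univ) <|
    ae_of_all _ fun s => ?_
  rw [Real.norm_of_nonneg measureReal_nonneg]
  exact measureReal_mono (subset_univ _)

theorem setIntegral_Icc_primitive_eq {ν : Measure ℝ} [IsFiniteMeasure ν] {φ : ℝ → ℝ} {a b : ℝ}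
    (hab : a ≤ b) (hφ : IntervalIntegrable φ volume a b) :
    ∫ t in Icc a b, (∫ s in a..t, φ s) ∂ν = ∫ s in a..b, φ s * ν.real (Icc s b) := by
  rw [intervalIntegrable_iff_integrableOn_Ioc_of_le hab] at hφ
  set F : ℝ → ℝ → ℝ := fun t s => {p : ℝ × ℝ | p.2 ≤ p.1}.indicator (fun p => φ p.2) (t, s)
  have hF : Integrable (Function.uncurry F)
      ((ν.restrict (Icc a b)).prod (volume.restrict (Ioc a b))) :=
    ((integrable_const (1 : ℝ)).mul_prod hφ).indicator
      (measurableSet_le measurable_snd measurable_fst) |>.congr (ae_of_all _ fun p => by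
        simp [F, indicator, Function.uncurry])
  have hinner : ∀ t ∈ Icc a b, ∫ s in a..t, φ s = ∫ s in Ioc a b, F t s := fun t ht => by
    rw [intervalIntegral.integral_of_le ht.1]
    have : F t = (Iic t).indicator φ := by ext s; simp [F, indicator]
    rw [this, setIntegral_indicator measurableSet_Iic, Ioc_inter_Iic, min_eq_right ht.2]
  have houter : ∀ s ∈ Ioc a b, ∫ t in Icc a b, F t s ∂ν = φ s * ν.real (Icc s b) := fun s hs => by
    have : (fun t => F t s) = (Ici s).indicator (fun _ => φ s) := by ext t; simp [F, indicator]
    rw [this, integral_indicator_const _ measurableSet_Ici, smul_eq_mul, mul_comm,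
      measureReal_restrict_apply measurableSet_Ici, ← Ici_inter_Iic, ← inter_assoc,
      Ici_inter_Ici, sup_eq_left.2 hs.1.le, Ici_inter_Iic]
  rw [setIntegral_congr_fun measurableSet_Icc hinner, integral_integral_swap hF,
    intervalIntegral.integral_of_le hab, setIntegral_congr_fun measurableSet_Ioc houter]

theorem IntervalIntegrable.ae_deriv_integral_eq {φ : ℝ → ℝ} {a b c : ℝ}
    (hφ : IntervalIntegrable φ volume a b) (hc : c ∈ [[a, b]]) :
    ∀ᵐ x, x ∈ Ι a b → deriv (fun x => ∫ s in c..x, φ s) x = φ x := by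
  filter_upwards [hφ.ae_hasDerivAt_integral] with x hx hxab
  exact (hx (uIoc_subset_uIcc hxab) c hc).deriv

theorem integral_mul_integral_from_eq_integral_integral_to_mul {φ ψ : ℝ → ℝ} {a b : ℝ}
    (hφ : IntervalIntegrable φ volume a b) (hψ : IntervalIntegrable ψ volume a b) :
    ∫ x in a..b, φ x * ∫ s in x..b, ψ s = ∫ x in a..b, (∫ s in a..x, φ s) * ψ x := by
  have ibp := (hφ.absolutelyContinuousOnInterval_intervalIntegral left_mem_uIcc)
    |>.integral_mul_deriv_eq_deriv_mul
      (hψ.absolutelyContinuousOnInterval_intervalIntegral right_mem_uIcc)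
  have hΨ' : ∫ x in a..b, (∫ s in a..x, φ s) * deriv (fun x => ∫ s in b..x, ψ s) x
      = ∫ x in a..b, (∫ s in a..x, φ s) * ψ x :=
    intervalIntegral.integral_congr_ae <| (hψ.ae_deriv_integral_eq right_mem_uIcc).mono
      fun x hx hxab => by rw [hx hxab]
  have hΦ' : ∫ x in a..b, deriv (fun x => ∫ s in a..x, φ s) x * ∫ s in b..x, ψ s
      = ∫ x in a..b, -(φ x * ∫ s in x..b, ψ s) :=
    intervalIntegral.integral_congr_ae <| (hφ.ae_deriv_integral_eq left_mem_uIcc).mono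
      fun x hx hxab => by rw [hx hxab, intervalIntegral.integral_symm x b, mul_neg]
  rw [hΨ', hΦ', intervalIntegral.integral_neg] at ibp
  simpa using ibp.symm

theorem integral_mul_primitive_self {φ : ℝ → ℝ} {a b : ℝ} (hφ : IntervalIntegrable φ volume a b) :
    ∫ x in a..b, φ x * ∫ s in a..x, φ s = (∫ x in a..b, φ x) ^ 2 / 2 := by
  have hswap := integral_mul_integral_from_eq_integral_integral_to_mul hφ hφ
  have hint : IntervalIntegrable (fun x => φ x * ∫ s in a..x, φ s) volume a b :=
    hφ.mul_continuousOn (intervalIntegral.continuousOn_primitive_interval' hφ left_mem_uIcc)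
  have htail : ∫ x in a..b, φ x * ∫ s in x..b, φ s
      = ∫ x in a..b, ((∫ s in a..b, φ s) * φ x - φ x * ∫ s in a..x, φ s) :=
    intervalIntegral.integral_congr fun x hx => by
      rw [← intervalIntegral.integral_interval_sub_left hφ (hφ.mono_set (uIcc_subset_uIcc_left hx))]
      ring
  rw [htail, intervalIntegral.integral_sub (hφ.const_mul _) hint,
    intervalIntegral.integral_const_mul] at hswap
  simp_rw [mul_comm (∫ s in a..(_ : ℝ), φ s)] at hswap
  linear_combination -hswap / 2

theorem setIntegral_Icc_primitive_sub_eq {ν ν' : Measure ℝ} [IsFiniteMeasure ν]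
    [IsFiniteMeasure ν'] {φ f : ℝ → ℝ} {a b : ℝ} (hab : a ≤ b)
    (hφ : IntervalIntegrable φ volume a b) (hf : IntervalIntegrable f volume a b)
    (hcdf : ∀ t ∈ Icc a b, ν.real (Iic t) - ν'.real (Iic t) = ∫ s in a..t, f s) :
    ∫ t in Icc a b, (∫ s in a..t, φ s) ∂ν - ∫ t in Icc a b, (∫ s in a..t, φ s) ∂ν'
      = ∫ x in a..b, (∫ s in a..x, φ s) * f x := by
  have htail : ∀ᵐ s, s ∈ Ι a b →
      φ s * ν.real (Icc s b) - φ s * ν'.real (Icc s b) = φ s * ∫ x in s..b, f x := by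
    filter_upwards [ae_measure_singleton_eq_zero ν volume, ae_measure_singleton_eq_zero ν' volume]
      with s hνs hν's hs
    rw [uIoc_of_le hab] at hs
    have hs' : s ∈ Icc a b := Ioc_subset_Icc_self hs
    rw [measureReal_Icc_eq_sub hνs hs.2, measureReal_Icc_eq_sub hν's hs.2, ← mul_sub,
      ← intervalIntegral.integral_interval_sub_left hf (hf.mono_set (uIcc_subset_uIcc_left
        (Icc_subset_uIcc hs'))), ← hcdf b ⟨hab, le_rfl⟩, ← hcdf s hs']
    ring
  rw [setIntegral_Icc_primitive_eq hab hφ, setIntegral_Icc_primitive_eq hab hφ,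
    ← intervalIntegral.integral_sub hφ.mul_measureReal_Icc hφ.mul_measureReal_Icc,
    intervalIntegral.integral_congr_ae htail,
    integral_mul_integral_from_eq_integral_integral_to_mul hφ hf]

theorem ae_nonneg_of_monotoneOn_primitive {g : ℝ → ℝ} {a b : ℝ}
    (hg : IntervalIntegrable g volume a b)
    (hmono : MonotoneOn (fun x => ∫ s in a..x, g s) (Icc a b)) :
    ∀ᵐ x, x ∈ Icc a b → 0 ≤ g x := by
  have hb : ∀ᵐ x : ℝ, x ≠ b := by simp [ae_iff, measure_singleton]
  have ha : ∀ᵐ x : ℝ, x ≠ a := by simp [ae_iff, measure_singleton]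
  filter_upwards [hg.ae_hasDerivAt_integral, ha, hb] with x hderiv hxa hxb hx
  have hx' : x ∈ Ioo a b := ⟨lt_of_le_of_ne hx.1 hxa.symm, lt_of_le_of_ne hx.2 hxb⟩
  have hacc : AccPt x (𝓟 (Icc a b)) :=
    accPt_principal_iff_nhdsWithin.2 <| (left_nhdsWithin_Ioo_neBot hx'.2).mono <|
      nhdsWithin_mono _ fun y hy => ⟨⟨hx'.1.trans hy.1 |>.le, hy.2.le⟩, hy.1.ne'⟩
  exact (hderiv (Icc_subset_uIcc hx) a left_mem_uIcc).hasDerivWithinAt.nonneg_of_monotoneOn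
    hacc hmono

theorem integral_mul_primitive_mul_nonpos {φ g H : ℝ → ℝ} {a b : ℝ} (hab : a ≤ b)
    (hφ : IntervalIntegrable φ volume a b) (hg : IntervalIntegrable g volume a b)
    (hH : ∀ x ∈ Icc a b, H x = H a + ∫ s in a..x, g s) (hmono : MonotoneOn H (Icc a b))
    (hHb : H b ≤ 0) :
    ∫ x in a..b, φ x * (∫ s in a..x, φ s) * H x ≤ 0 := by
  have hφΦ : IntervalIntegrable (fun x => φ x * ∫ s in a..x, φ s) volume a b :=
    hφ.mul_continuousOn (intervalIntegral.continuousOn_primitive_interval' hφ left_mem_uIcc)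
  have hg_nonneg : ∀ᵐ x, x ∈ Icc a b → 0 ≤ g x :=
    ae_nonneg_of_monotoneOn_primitive hg fun x hx y hy hxy => by
      simpa [hH x hx, hH y hy] using hmono hx hy hxy
  have hH_tail : ∀ x ∈ [[a, b]], H x = H b - ∫ s in x..b, g s := fun x hx => by
    rw [uIcc_of_le hab] at hx
    rw [hH x hx, hH b ⟨hab, le_rfl⟩, ← intervalIntegral.integral_interval_sub_left hg
      (hg.mono_set (uIcc_subset_uIcc_left (Icc_subset_uIcc hx)))]
    ring
  -- `φ Φ = (Φ² / 2)'`, integrated by parts against `H' = g`.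
  have hparts : ∫ x in a..b, φ x * (∫ s in a..x, φ s) * H x
      = H b * ((∫ s in a..b, φ s) ^ 2 / 2)
        - ∫ x in a..b, (∫ s in a..x, φ s) ^ 2 / 2 * g x := by
    rw [intervalIntegral.integral_congr fun x hx => by rw [hH_tail x hx, mul_sub],
      intervalIntegral.integral_sub (hφΦ.mul_const _) (hφΦ.mul_continuousOn ?_),
      intervalIntegral.integral_mul_const, integral_mul_primitive_self hφ, mul_comm,
      integral_mul_integral_from_eq_integral_integral_to_mul hφΦ hg]
    · congr 1
      refine intervalIntegral.integral_congr fun x hx => ?_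
      rw [integral_mul_primitive_self (hφ.mono_set (uIcc_subset_uIcc_left hx))]
    · exact (intervalIntegral.continuousOn_primitive_interval' hg right_mem_uIcc).neg.congr
        fun x _ => by simp [intervalIntegral.integral_symm b x]
  have hrest : 0 ≤ ∫ x in a..b, (∫ s in a..x, φ s) ^ 2 / 2 * g x :=
    intervalIntegral.integral_nonneg_of_ae_restrict hab <|
      (ae_restrict_iff' measurableSet_Icc).2 <| hg_nonneg.mono fun x hx hxab =>
        mul_nonneg (by positivity) (hx hxab)
  rw [hparts]
  nlinarith [mul_nonpos_of_nonpos_of_nonneg hHb (by positivity : 0 ≤ (∫ s in a..b, φ s) ^ 2 / 2)]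

theorem MonotoneOn.comp₃ {α β γ δ : Type*} [Preorder α] [Preorder β] [Preorder γ] [Preorder δ]
    {h : α → β → γ → δ} {I : Set α} {J : Set β} {K : Set γ} {u : α → β} {v : α → γ}
    (hmono_t : ∀ x ∈ J, ∀ y ∈ K, MonotoneOn (fun t => h t x y) I)
    (hmono_x : ∀ t ∈ I, ∀ y ∈ K, MonotoneOn (fun x => h t x y) J)
    (hmono_y : ∀ t ∈ I, ∀ x ∈ J, MonotoneOn (fun y => h t x y) K)
    (hu : MonotoneOn u I) (hv : MonotoneOn v I) (huJ : MapsTo u I J) (hvK : MapsTo v I K) :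
    MonotoneOn (fun t => h t (u t) (v t)) I := fun s hs t ht hst =>
  calc h s (u s) (v s) ≤ h t (u s) (v s) := hmono_t _ (huJ hs) _ (hvK hs) hs ht hst
    _ ≤ h t (u t) (v s) := hmono_x t ht _ (hvK hs) (huJ hs) (huJ ht) (hu hs ht hst)
    _ ≤ h t (u t) (v t) := hmono_y t ht _ (huJ ht) (hvK hs) (hvK ht) (hv hs ht hst)

theorem sub_eq_sub_mul_of_eq_div {K : Type*} [Field K] {f : K → K} {x y c : K}
    (hc : x ≠ y → c = (f x - f y) / (x - y)) : f x - f y = (x - y) * c := by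
  rcases eq_or_ne x y with rfl | hxy
  · ring
  · rw [hc hxy, mul_div_cancel₀ _ (sub_ne_zero.2 hxy)]

theorem sub_eq_integral_sub_of_eq_integral {u v u' v' : ℝ → ℝ} {a b : ℝ}
    (hu' : IntervalIntegrable u' volume a b) (hv' : IntervalIntegrable v' volume a b)
    (hu : ∀ t ∈ Icc a b, u t = u a + ∫ s in a..t, u' s)
    (hv : ∀ t ∈ Icc a b, v t = v a + ∫ s in a..t, v' s) (ha : u a = v a) :
    ∀ t ∈ Icc a b, u t - v t = ∫ s in a..t, (u' s - v' s) := fun t ht => by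
  have hsub : uIcc a t ⊆ uIcc a b := uIcc_subset_uIcc_left (Icc_subset_uIcc ht)
  rw [intervalIntegral.integral_sub (hu'.mono_set hsub) (hv'.mono_set hsub), hu t ht, hv t ht, ha]
  ring

theorem stmt14_general (t₀ T : ℝ) (hT : t₀ ≤ T)
    (R : ℝ → ℝ → ℝ) (h : ℝ → ℝ → ℝ → ℝ)
    (hdiv : ∀ t ∈ Icc t₀ T, ∀ x ∈ Icc (0:ℝ) 1, ∀ y ∈ Icc (0:ℝ) 1, x ≠ y →
      h t x y = (R t x - R t y) / (x - y))
    (hneg : ∀ t ∈ Icc t₀ T, ∀ x ∈ Icc (0:ℝ) 1, ∀ y ∈ Icc (0:ℝ) 1, h t x y ≤ 0)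
    (hmono_t : ∀ x ∈ Icc (0:ℝ) 1, ∀ y ∈ Icc (0:ℝ) 1,
      MonotoneOn (fun t => h t x y) (Icc t₀ T))
    (hmono_x : ∀ t ∈ Icc t₀ T, ∀ y ∈ Icc (0:ℝ) 1,
      MonotoneOn (fun x => h t x y) (Icc (0:ℝ) 1))
    (hmono_y : ∀ t ∈ Icc t₀ T, ∀ x ∈ Icc (0:ℝ) 1,
      MonotoneOn (fun y => h t x y) (Icc (0:ℝ) 1))
    (μ μ' : Measure ℝ) [IsProbabilityMeasure μ] [IsProbabilityMeasure μ']
    (Fμ Fμ' fμ fμ' : ℝ → ℝ)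
    (hFμdef : ∀ t, Fμ t = (μ (Iic t)).toReal)
    (hFμ'def : ∀ t, Fμ' t = (μ' (Iic t)).toReal)
    (hfμ : IntervalIntegrable fμ volume t₀ T)
    (hfμ' : IntervalIntegrable fμ' volume t₀ T)
    (hACμ : ∀ t ∈ Icc t₀ T, Fμ t = Fμ t₀ + ∫ s in t₀..t, fμ s)
    (hACμ' : ∀ t ∈ Icc t₀ T, Fμ' t = Fμ' t₀ + ∫ s in t₀..t, fμ' s)
    (h0 : Fμ t₀ = Fμ' t₀)
    (gR gR' gh : ℝ → ℝ)
    (hgR : IntervalIntegrable gR volume t₀ T)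
    (hgR' : IntervalIntegrable gR' volume t₀ T)
    (hgh : IntervalIntegrable gh volume t₀ T)
    (hRAC : ∀ t ∈ Icc t₀ T, R t (Fμ t) = R t₀ (Fμ t₀) + ∫ s in t₀..t, gR s)
    (hRAC' : ∀ t ∈ Icc t₀ T, R t (Fμ' t) = R t₀ (Fμ' t₀) + ∫ s in t₀..t, gR' s)
    (hhAC : ∀ t ∈ Icc t₀ T,
      h t (Fμ t) (Fμ' t) = h t₀ (Fμ t₀) (Fμ' t₀) + ∫ s in t₀..t, gh s) :
    (∫ t in Icc t₀ T, (R t (Fμ t) - R t (Fμ' t)) ∂μ)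
      - (∫ t in Icc t₀ T, (R t (Fμ t) - R t (Fμ' t)) ∂μ') ≤ 0 := by
  simp only [← measureReal_def] at hFμdef hFμ'def
  have hFμ : MapsTo Fμ (Icc t₀ T) (Icc 0 1) := fun t _ =>
    hFμdef t ▸ ⟨measureReal_nonneg, measureReal_le_one⟩
  have hFμ' : MapsTo Fμ' (Icc t₀ T) (Icc 0 1) := fun t _ =>
    hFμ'def t ▸ ⟨measureReal_nonneg, measureReal_le_one⟩
  have hG := sub_eq_integral_sub_of_eq_integral hfμ hfμ' hACμ hACμ' h0
  have hD := sub_eq_integral_sub_of_eq_integral hgR hgR' hRAC hRAC' (by rw [h0])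
  have hH_mono : MonotoneOn (fun t => h t (Fμ t) (Fμ' t)) (Icc t₀ T) :=
    MonotoneOn.comp₃ hmono_t hmono_x hmono_y
      (by simpa [funext hFμdef] using (monotone_measureReal_Iic μ).monotoneOn _)
      (by simpa [funext hFμ'def] using (monotone_measureReal_Iic μ').monotoneOn _) hFμ hFμ'
  rw [setIntegral_congr_fun measurableSet_Icc hD, setIntegral_congr_fun measurableSet_Icc hD,
    setIntegral_Icc_primitive_sub_eq hT (hgR.sub hgR') (hfμ.sub hfμ')
      (fun t ht => by rw [← hFμdef, ← hFμ'def, hG t ht])]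
  calc ∫ x in t₀..T, (∫ s in t₀..x, (gR s - gR' s)) * (fμ x - fμ' x)
      = ∫ x in t₀..T, (fμ x - fμ' x) * (∫ s in t₀..x, (fμ s - fμ' s)) * h x (Fμ x) (Fμ' x) :=
        intervalIntegral.integral_congr fun x hx => by
          rw [uIcc_of_le hT] at hx
          rw [← hD x hx, ← hG x hx, sub_eq_sub_mul_of_eq_div (hdiv x hx _ (hFμ hx) _ (hFμ' hx))]
          ring
    _ ≤ 0 := integral_mul_primitive_mul_nonpos hT (hfμ.sub hfμ') hgh hhAC hH_mono
        (hneg T ⟨hT, le_rfl⟩ _ (hFμ ⟨hT, le_rfl⟩) _ (hFμ' ⟨hT, le_rfl⟩))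

/-- Lasry–Lions-type monotonicity. If the divided difference
h(t,x,y) = (R(t,x) − R(t,y))/(x − y) (extended by ∂ₓR(t,x) on the diagonal) is non-positive
and increasing in each of t, x, y, and μ, μ′ are probability measures whose c.d.f.s are
absolutely continuous on [t₀,T] (expressed via integrable densities) with Fμ(t₀) = Fμ′(t₀),
and t ↦ R(t,Fμ(t)), t ↦ R(t,Fμ′(t)), t ↦ h(t,Fμ(t),Fμ′(t)) are absolutely continuous on
[t₀,T], then ∫_{t₀}^T (R(t,Fμ(t)) − R(t,Fμ′(t))) d(μ − μ′)(t) ≤ 0. -/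
theorem stmt14 (t₀ T : ℝ) (hT : t₀ ≤ T)
    (R : ℝ → ℝ → ℝ) (h : ℝ → ℝ → ℝ → ℝ)
    (hdiv : ∀ t ∈ Icc t₀ T, ∀ x ∈ Icc (0:ℝ) 1, ∀ y ∈ Icc (0:ℝ) 1, x ≠ y →
      h t x y = (R t x - R t y) / (x - y))
    (hdiag : ∀ t ∈ Icc t₀ T, ∀ x ∈ Icc (0:ℝ) 1, HasDerivAt (fun x' => R t x') (h t x x) x)
    (hneg : ∀ t ∈ Icc t₀ T, ∀ x ∈ Icc (0:ℝ) 1, ∀ y ∈ Icc (0:ℝ) 1, h t x y ≤ 0)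
    (hmono_t : ∀ x ∈ Icc (0:ℝ) 1, ∀ y ∈ Icc (0:ℝ) 1,
      MonotoneOn (fun t => h t x y) (Icc t₀ T))
    (hmono_x : ∀ t ∈ Icc t₀ T, ∀ y ∈ Icc (0:ℝ) 1,
      MonotoneOn (fun x => h t x y) (Icc (0:ℝ) 1))
    (hmono_y : ∀ t ∈ Icc t₀ T, ∀ x ∈ Icc (0:ℝ) 1,
      MonotoneOn (fun y => h t x y) (Icc (0:ℝ) 1))
    (μ μ' : Measure ℝ) [IsProbabilityMeasure μ] [IsProbabilityMeasure μ']
    (Fμ Fμ' fμ fμ' : ℝ → ℝ)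
    (hFμdef : ∀ t, Fμ t = (μ (Iic t)).toReal)
    (hFμ'def : ∀ t, Fμ' t = (μ' (Iic t)).toReal)
    (hfμ : IntervalIntegrable fμ volume t₀ T)
    (hfμ' : IntervalIntegrable fμ' volume t₀ T)
    (hACμ : ∀ t ∈ Icc t₀ T, Fμ t = Fμ t₀ + ∫ s in t₀..t, fμ s)
    (hACμ' : ∀ t ∈ Icc t₀ T, Fμ' t = Fμ' t₀ + ∫ s in t₀..t, fμ' s)
    (h0 : Fμ t₀ = Fμ' t₀)
    (gR gR' gh : ℝ → ℝ)
    (hgR : IntervalIntegrable gR volume t₀ T)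
    (hgR' : IntervalIntegrable gR' volume t₀ T)
    (hgh : IntervalIntegrable gh volume t₀ T)
    (hRAC : ∀ t ∈ Icc t₀ T, R t (Fμ t) = R t₀ (Fμ t₀) + ∫ s in t₀..t, gR s)
    (hRAC' : ∀ t ∈ Icc t₀ T, R t (Fμ' t) = R t₀ (Fμ' t₀) + ∫ s in t₀..t, gR' s)
    (hhAC : ∀ t ∈ Icc t₀ T,
      h t (Fμ t) (Fμ' t) = h t₀ (Fμ t₀) (Fμ' t₀) + ∫ s in t₀..t, gh s) :
    (∫ t in Icc t₀ T, (R t (Fμ t) - R t (Fμ' t)) ∂μ)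
      - (∫ t in Icc t₀ T, (R t (Fμ t) - R t (Fμ' t)) ∂μ') ≤ 0 :=
  stmt14_general t₀ T hT R h hdiv hneg hmono_t hmono_x hmono_y μ μ' Fμ Fμ' fμ fμ' hFμdef hFμ'def hfμ
    hfμ' hACμ hACμ' h0 gR gR' gh hgR hgR' hgh hRAC hRAC' hhAC
end
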